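/- Let X, Y ∈ M_{2d}(ℝ) with Y symmetric. The following are equivalent: (i) there exist d' ≥ 1 and a (J_{2d} ⊕ J_{2d'})-symplectic matrix L = [[X, L₁₂], [L₂₁, L₂₂]] with L₂₁^T L₂₁ = Y; (ii) Y + i(J_{2d} - X^T J_{2d} X) ≥ 0; (iii) Y - i(J_{2d} - X^T J_{2d} X) ≥ 0. Moreover in each case Y ≥ 0, and in (i) one may take d' = 2d. -/

import Mathlib

/-!
Write `A = J - XᵀJX`. If `L` is a symplectic dilation, the upper-left block of
`Lᵀ(J ⊕ J')L = J ⊕ J'` reads `A = L₂₁ᵀJ'L₂₁`, so `Y + iA = L₂₁ᵀ(1 + iJ')L₂₁`, and `1 + iJ'` is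
twice an orthogonal projection, hence positive. Transposing exchanges `Y + iA` and `Y - iA`.
Conversely, factor `Y + iA = M*M` and split `M = R + iS`; then `C = [R; S]` satisfies `CᵀC = Y`
and `CᵀJC = A`, so the columns of `[X; C]` span a symplectic subspace of `(ℝ^{2d+4d}, J ⊕ J)`.
A Darboux basis of its symplectic complement supplies the remaining columns of `L`.
-/

open Matrix Module Submodule Complex
open scoped ComplexOrder

def stdJ (l R : Type*) [DecidableEq l] [Zero R] [One R] [Neg R] : Matrix (l ⊕ l) (l ⊕ l) R :=
  fromBlocks 0 1 (-1) 0

section stdJ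

variable (l R : Type*) [DecidableEq l] [CommRing R]

theorem stdJ_eq_neg_J : stdJ l R = -J l R := by
  simp [stdJ, J, fromBlocks_neg]

theorem stdJ_transpose : (stdJ l R)ᵀ = -stdJ l R := by
  rw [stdJ_eq_neg_J, transpose_neg, J_transpose]

variable [Fintype l]

theorem stdJ_mul_self : stdJ l R * stdJ l R = -1 := by
  rw [stdJ_eq_neg_J, neg_mul_neg, J_squared]

end stdJ

namespace LinearMap.BilinForm

variable {K V ι : Type*} [Field K] [AddCommGroup V] [Module K V] {B : LinearMap.BilinForm K V}

def gram (B : LinearMap.BilinForm K V) (v : ι → V) : Matrix ι ι K :=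
  Matrix.of fun a b => B (v a) (v b)

variable [Fintype ι] [DecidableEq ι] {v : ι → V}

theorem eq_zero_of_apply_sum_smul_eq_zero (hv : (B.gram v).det ≠ 0) {c : ι → K}
    (hc : ∀ b, B (∑ a, c a • v a) (v b) = 0) : c = 0 := by
  refine eq_zero_of_vecMul_eq_zero hv (funext fun b => ?_)
  simpa [vecMul, dotProduct, gram, LinearMap.sum_apply] using hc b

theorem linearIndependent_of_det_gram_ne_zero (hv : (B.gram v).det ≠ 0) :
    LinearIndependent K v :=
  Fintype.linearIndependent_iff.mpr fun c hc =>
    congrFun (eq_zero_of_apply_sum_smul_eq_zero hv fun b => by simp [hc])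

theorem nondegenerate_restrict_span_of_det_gram_ne_zero (hB : B.IsRefl)
    (hv : (B.gram v).det ≠ 0) : (B.restrict (span K (Set.range v))).Nondegenerate := by
  refine B.nondegenerate_restrict_of_disjoint_orthogonal hB ?_
  rw [Submodule.disjoint_def]
  intro w hw hw'
  obtain ⟨c, rfl⟩ := (mem_span_range_iff_exists_fun K).mp hw
  have hc := eq_zero_of_apply_sum_smul_eq_zero hv fun b =>
    hB _ _ (hw' (v b) (subset_span (Set.mem_range_self b)))
  simp [hc]

theorem nondegenerate_restrict_orthogonal (hB : B.Nondegenerate) (hrefl : B.IsRefl)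
    [FiniteDimensional K V] {W : Submodule K V} (hW : (B.restrict W).Nondegenerate) :
    (B.restrict (B.orthogonal W)).Nondegenerate := by
  refine B.nondegenerate_restrict_of_disjoint_orthogonal hrefl ?_
  rw [orthogonal_orthogonal hB hrefl]
  exact (isCompl_orthogonal_of_restrict_nondegenerate hrefl hW).disjoint.symm

theorem exists_apply_eq_one (hB : B.Nondegenerate) [Nontrivial V] : ∃ x y, B x y = 1 := by
  obtain ⟨x, hx⟩ := exists_ne (0 : V)
  obtain ⟨y, hy⟩ : ∃ y, B x y ≠ 0 := by
    by_contra! h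
    exact hx (hB.1 x h)
  exact ⟨x, (B x y)⁻¹ • y, by simp [hy]⟩

theorem exists_gram_eq_stdJ (m : ℕ) :
    ∀ {V : Type*} [AddCommGroup V] [Module K V] [FiniteDimensional K V]
      {B : LinearMap.BilinForm K V}, B.IsAlt → B.Nondegenerate → finrank K V = 2 * m →
      ∃ v : Fin m ⊕ Fin m → V, B.gram v = stdJ (Fin m) K := by
  induction m with
  | zero =>
    intro V _ _ _ B _ _ _
    exact ⟨fun a => a.elim Fin.elim0 Fin.elim0, Matrix.ext fun a => a.elim Fin.elim0 Fin.elim0⟩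
  | succ m ih =>
    intro V _ _ _ B halt hB hdim
    have hrefl : B.IsRefl := halt.isRefl
    have : Nontrivial V := Module.nontrivial_of_finrank_pos (R := K) (by omega)
    obtain ⟨x, y, hxy⟩ := exists_apply_eq_one hB
    have hyx : B y x = -1 := by rw [← halt.neg_eq x y, hxy]
    have hgram : (B.gram ![x, y]).det ≠ 0 := by
      simp [det_fin_two, gram, halt x, halt y, hxy, hyx]
    -- split off the hyperbolic plane spanned by `x, y` and recurse on its orthogonal
    set W := B.orthogonal (span K (Set.range ![x, y]))
    have hW : (B.restrict W).Nondegenerate := nondegenerate_restrict_orthogonal hB hrefl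
      (nondegenerate_restrict_span_of_det_gram_ne_zero hrefl hgram)
    have hdimW : finrank K W = 2 * m := by
      rw [finrank_orthogonal hB, finrank_span_eq_card (linearIndependent_of_det_gram_ne_zero hgram),
        hdim, Fintype.card_fin]
      omega
    obtain ⟨w, hw⟩ := ih (B := B.restrict W) (fun z => halt z) hW hdimW
    have hxw : ∀ a, B x (w a) = 0 := fun a => (w a).2 x (subset_span ⟨0, rfl⟩)
    have hyw : ∀ a, B y (w a) = 0 := fun a => (w a).2 y (subset_span ⟨1, rfl⟩)
    have hwx : ∀ a, B (w a) x = 0 := fun a => hrefl _ _ (hxw a)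
    have hwy : ∀ a, B (w a) y = 0 := fun a => hrefl _ _ (hyw a)
    have hww : ∀ a b, B (w a) (w b) = stdJ (Fin m) K a b := fun a b => congrFun (congrFun hw a) b
    refine ⟨Sum.elim (Fin.cons x fun i => w (.inl i)) (Fin.cons y fun i => w (.inr i)), ?_⟩
    ext (a | a) (b | b) <;> cases a using Fin.cases <;> cases b using Fin.cases <;>
      simp [gram, stdJ, halt x, halt y, hxy, hyx, hxw, hyw, hwx, hwy, hww, one_apply,
        Fin.succ_ne_zero, (Fin.succ_ne_zero _).symm]

end LinearMap.BilinForm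

namespace Matrix

section Symplectic

variable {K n m : Type*} [Field K] [Fintype n]

theorem transpose_transpose_mul_mul {p : Type*} {Ω : Matrix n n K} (hΩ : Ωᵀ = -Ω)
    (A : Matrix n m K) (C : Matrix n p K) : (Aᵀ * Ω * C)ᵀ = -(Cᵀ * Ω * A) := by
  rw [transpose_mul, transpose_mul, transpose_transpose, hΩ, Matrix.neg_mul, Matrix.mul_neg,
    Matrix.mul_assoc]

variable [DecidableEq n]

theorem toBilin'_transpose_apply {p : Type*} (Ω : Matrix n n K) (A : Matrix n m K)
    (C : Matrix n p K) (a : m) (c : p) : Ω.toBilin' (Aᵀ a) (Cᵀ c) = (Aᵀ * Ω * C) a c := by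
  rw [toBilin'_apply', Matrix.mul_assoc, mul_apply']
  rfl

theorem isAlt_toBilin' [NeZero (2 : K)] {Ω : Matrix n n K} (hΩ : Ωᵀ = -Ω) :
    Ω.toBilin'.IsAlt := by
  intro v
  have h : v ⬝ᵥ Ω *ᵥ v = -(v ⬝ᵥ Ω *ᵥ v) := by
    conv_lhs => rw [dotProduct_mulVec, ← mulVec_transpose, hΩ, neg_mulVec, neg_dotProduct,
      dotProduct_comm]
  rw [toBilin'_apply']
  exact (mul_eq_zero.mp (by linear_combination h : (2 : K) * _ = 0)).resolve_left two_ne_zero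

theorem det_ne_zero_of_mul_self_eq_neg_one {Ω : Matrix n n K} (hΩ : Ω * Ω = -1) : Ω.det ≠ 0 :=
  det_ne_zero_of_right_inverse (by rw [Matrix.mul_neg, hΩ, neg_neg] : Ω * -Ω = 1)

variable [Fintype m] [DecidableEq m]

theorem exists_symplectic_complement [NeZero (2 : K)] {Ω : Matrix n n K} (hΩ : Ωᵀ = -Ω)
    (hdet : Ω.det ≠ 0) {M : Matrix n m K} (hM : (Mᵀ * Ω * M).det ≠ 0) {q : ℕ}
    (hcard : Fintype.card n = Fintype.card m + 2 * q) :
    ∃ N : Matrix n (Fin q ⊕ Fin q) K, Mᵀ * Ω * N = 0 ∧ Nᵀ * Ω * N = stdJ (Fin q) K := by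
  set B := Ω.toBilin'
  have halt : B.IsAlt := isAlt_toBilin' hΩ
  have hB : B.Nondegenerate := nondegenerate_toBilin'_iff.mpr (nondegenerate_of_det_ne_zero hdet)
  have hgram : B.gram (fun a => Mᵀ a) = Mᵀ * Ω * M :=
    Matrix.ext fun a b => toBilin'_transpose_apply Ω M M a b
  rw [← hgram] at hM
  set W := B.orthogonal (span K (Set.range fun a => Mᵀ a))
  have hW : (B.restrict W).Nondegenerate := B.nondegenerate_restrict_orthogonal hB halt.isRefl
    (B.nondegenerate_restrict_span_of_det_gram_ne_zero halt.isRefl hM)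
  have hdimW : finrank K W = 2 * q := by
    rw [LinearMap.BilinForm.finrank_orthogonal hB,
      finrank_span_eq_card (B.linearIndependent_of_det_gram_ne_zero hM),
      finrank_fintype_fun_eq_card, hcard, Nat.add_sub_cancel_left]
  obtain ⟨w, hw⟩ := LinearMap.BilinForm.exists_gram_eq_stdJ q (B := B.restrict W)
    (fun z => halt z) hW hdimW
  refine ⟨(Matrix.of fun c => (w c : n → K))ᵀ, ?_, ?_⟩
  · ext a c
    rw [← toBilin'_transpose_apply, transpose_transpose]
    exact (w c).2 _ (subset_span ⟨a, rfl⟩)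
  · ext a c
    rw [← toBilin'_transpose_apply, transpose_transpose, ← hw]
    rfl

end Symplectic

section Dilation

variable {K l : Type*} [Field K] [NeZero (2 : K)] [Fintype l] [DecidableEq l] {q : ℕ}

theorem exists_symplectic_dilation (X : Matrix (l ⊕ l) (l ⊕ l) K)
    (C : Matrix (Fin q ⊕ Fin q) (l ⊕ l) K)
    (hC : Cᵀ * stdJ (Fin q) K * C = stdJ l K - Xᵀ * stdJ l K * X) :
    ∃ L₁₂ L₂₂, (fromBlocks X L₁₂ C L₂₂)ᵀ * fromBlocks (stdJ l K) 0 0 (stdJ (Fin q) K) *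
      fromBlocks X L₁₂ C L₂₂ = fromBlocks (stdJ l K) 0 0 (stdJ (Fin q) K) := by
  set Ω := fromBlocks (stdJ l K) 0 0 (stdJ (Fin q) K)
  have hΩt : Ωᵀ = -Ω := by
    rw [fromBlocks_transpose, fromBlocks_neg, stdJ_transpose, stdJ_transpose]
    simp
  have hΩsq : Ω * Ω = -1 := by
    rw [fromBlocks_multiply, ← fromBlocks_one, fromBlocks_neg, stdJ_mul_self, stdJ_mul_self]
    simp
  have hK : (fromRows X C)ᵀ * Ω * fromRows X C = stdJ l K := by
    rw [transpose_fromRows, fromCols_mul_fromBlocks, fromCols_mul_fromRows]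
    simp [hC]
  obtain ⟨N, hKN, hN⟩ := exists_symplectic_complement (q := q) hΩt
    (det_ne_zero_of_mul_self_eq_neg_one hΩsq)
    (hK ▸ det_ne_zero_of_mul_self_eq_neg_one (stdJ_mul_self l K))
    (by simp only [Fintype.card_sum, Fintype.card_fin]; ring)
  have hNK : Nᵀ * Ω * fromRows X C = 0 := by
    rw [← neg_eq_zero, ← transpose_transpose_mul_mul hΩt, hKN, transpose_zero]
  refine ⟨N.toRows₁, N.toRows₂, ?_⟩
  rw [← fromCols_fromRows_eq_fromBlocks, fromRows_toRows, transpose_fromCols, fromRows_mul,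
    fromRows_mul_fromCols, hK, hKN, hN, hNK]

end Dilation

section Complexification

variable {n m k l : Type*}

theorem conjTranspose_map_ofReal (A : Matrix m k ℝ) : (A.map ofReal)ᴴ = Aᵀ.map ofReal := by
  ext; simp

theorem map_ofReal_neg (A : Matrix m k ℝ) : (-A).map ofReal = -A.map ofReal :=
  Matrix.map_neg _ ofReal_neg A

theorem map_ofReal_mul [Fintype k] (A : Matrix m k ℝ) (B : Matrix k l ℝ) :
    (A * B).map ofReal = A.map ofReal * B.map ofReal :=
  Matrix.map_mul (f := ofRealHom)

theorem map_ofReal_add_I_smul_inj {Y A Y' A' : Matrix m n ℝ} :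
    Y.map ofReal + I • A.map ofReal = Y'.map ofReal + I • A'.map ofReal ↔ Y = Y' ∧ A = A' := by
  refine ⟨fun h => ⟨?_, ?_⟩, fun h => by rw [h.1, h.2]⟩ <;> ext i j
  · simpa using congrArg re (congrFun (congrFun h i) j)
  · simpa using congrArg im (congrFun (congrFun h i) j)

theorem conjTranspose_mul_self_eq_re_im [Fintype k] (M : Matrix k l ℂ) :
    Mᴴ * M = ((M.map re)ᵀ * M.map re + (M.map im)ᵀ * M.map im).map ofReal
      + I • ((M.map re)ᵀ * M.map im - (M.map im)ᵀ * M.map re).map ofReal := by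
  ext i j
  apply Complex.ext <;>
    simp [mul_apply, ← Finset.sum_add_distrib, ← Finset.sum_sub_distrib, mul_comm, neg_add_eq_sub]

theorem posSemidef_add_I_smul_iff_sub {Y A : Matrix n n ℝ} (hY : Yᵀ = Y) (hA : Aᵀ = -A) :
    (Y.map ofReal + I • A.map ofReal).PosSemidef ↔
      (Y.map ofReal - I • A.map ofReal).PosSemidef := by
  have h : (Y.map ofReal + I • A.map ofReal)ᵀ = Y.map ofReal - I • A.map ofReal := by
    rw [transpose_add, transpose_smul, ← transpose_map, ← transpose_map, hY, hA, map_ofReal_neg,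
      smul_neg, ← sub_eq_add_neg]
  refine ⟨fun hpos => h ▸ hpos.transpose, fun hpos => ?_⟩
  rw [← transpose_transpose (Y.map ofReal + I • A.map ofReal), h]
  exact hpos.transpose

variable [Fintype n]

theorem posSemidef_one_add_I_smul [DecidableEq n] {Ĵ : Matrix n n ℝ} (hskew : Ĵᵀ = -Ĵ)
    (hsq : Ĵ * Ĵ = -1) :
    (1 + I • Ĵ.map ofReal).PosSemidef := by
  set P : Matrix n n ℂ := 1 + I • Ĵ.map ofReal
  have hsq' : Ĵ.map ofReal * Ĵ.map ofReal = -1 := by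
    rw [← map_ofReal_mul, hsq]; ext i j; simp [one_apply, apply_ite]
  have hP : Pᴴ = P := by
    simp [P, conjTranspose_map_ofReal, hskew, map_ofReal_neg]
  have hPP : Pᴴ * P = (2 : ℝ) • P := by
    rw [hP]
    simp only [P, add_mul, mul_add, smul_mul_smul_comm, hsq', one_mul, mul_one, I_mul_I]
    module
  have : P = (2⁻¹ : ℝ) • (Pᴴ * P) := by
    rw [hPP, smul_smul]; norm_num
  rw [this]
  exact (posSemidef_conjTranspose_mul_self P).smul (by norm_num)

theorem posSemidef_transpose_mul_self_add_I_smul [Fintype k] [DecidableEq k] {Ĵ : Matrix k k ℝ}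
    (hskew : Ĵᵀ = -Ĵ) (hsq : Ĵ * Ĵ = -1) (C : Matrix k n ℝ) :
    ((Cᵀ * C).map ofReal + I • (Cᵀ * Ĵ * C).map ofReal).PosSemidef := by
  have : (Cᵀ * C).map ofReal + I • (Cᵀ * Ĵ * C).map ofReal =
      (C.map ofReal)ᴴ * (1 + I • Ĵ.map ofReal) * C.map ofReal := by
    rw [conjTranspose_map_ofReal, Matrix.mul_add, Matrix.add_mul, Matrix.mul_one,
      Matrix.mul_smul, Matrix.smul_mul, map_ofReal_mul, map_ofReal_mul, map_ofReal_mul]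
  rw [this]
  exact (posSemidef_one_add_I_smul hskew hsq).conjTranspose_mul_mul_same _

open scoped MatrixOrder in
theorem exists_factorization_of_posSemidef [DecidableEq n] [Fintype k] [DecidableEq k]
    (hk : Fintype.card k = Fintype.card n) {Y A : Matrix n n ℝ}
    (h : (Y.map ofReal + I • A.map ofReal).PosSemidef) :
    ∃ C : Matrix (k ⊕ k) n ℝ, Cᵀ * C = Y ∧ Cᵀ * stdJ k ℝ * C = A := by
  obtain ⟨M, hM⟩ := CStarAlgebra.nonneg_iff_eq_star_mul_self.mp h.nonneg
  set M' := M.submatrix (Fintype.equivOfCardEq hk) id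
  have hM' : M'ᴴ * M' = Y.map ofReal + I • A.map ofReal := by
    rw [conjTranspose_submatrix, submatrix_mul_equiv, submatrix_id_id]
    exact hM.symm
  refine ⟨fromRows (M'.map re) (M'.map im), ?_⟩
  rw [conjTranspose_mul_self_eq_re_im, map_ofReal_add_I_smul_inj] at hM'
  rw [transpose_fromRows, fromCols_mul_fromRows, Matrix.mul_assoc, stdJ, fromBlocks_mul_fromRows,
    fromCols_mul_fromRows, ← hM'.1, ← hM'.2]
  simp [sub_eq_add_neg]

end Complexification

theorem posSemidef_of_symplectic_dilation {l l' : Type*} [Fintype l] [DecidableEq l] [Fintype l']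
    [DecidableEq l'] {X : Matrix (l ⊕ l) (l ⊕ l) ℝ} {L₁₂ : Matrix (l ⊕ l) (l' ⊕ l') ℝ}
    {L₂₁ : Matrix (l' ⊕ l') (l ⊕ l) ℝ} {L₂₂ : Matrix (l' ⊕ l') (l' ⊕ l') ℝ}
    (h : (fromBlocks X L₁₂ L₂₁ L₂₂)ᵀ * fromBlocks (stdJ l ℝ) 0 0 (stdJ l' ℝ) *
      fromBlocks X L₁₂ L₂₁ L₂₂ = fromBlocks (stdJ l ℝ) 0 0 (stdJ l' ℝ)) :
    ((L₂₁ᵀ * L₂₁).map ofReal + I • (stdJ l ℝ - Xᵀ * stdJ l ℝ * X).map ofReal).PosSemidef := by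
  rw [fromBlocks_transpose, fromBlocks_multiply, fromBlocks_multiply, fromBlocks_inj] at h
  have h₁₁ := h.1
  simp only [Matrix.mul_zero, add_zero, zero_add] at h₁₁
  rw [sub_eq_of_eq_add' h₁₁.symm]
  exact posSemidef_transpose_mul_self_add_I_smul (stdJ_transpose _ _) (stdJ_mul_self _ _) L₂₁

end Matrix

theorem stmt_13 (d : ℕ) (X Y : Matrix (Fin d ⊕ Fin d) (Fin d ⊕ Fin d) ℝ) (hY : Yᵀ = Y) :
    let J : Matrix (Fin d ⊕ Fin d) (Fin d ⊕ Fin d) ℝ := Matrix.fromBlocks 0 1 (-1) 0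
    let dil : ℕ → Prop := fun d' =>
      ∃ (L₁₂ : Matrix (Fin d ⊕ Fin d) (Fin d' ⊕ Fin d') ℝ)
        (L₂₁ : Matrix (Fin d' ⊕ Fin d') (Fin d ⊕ Fin d) ℝ)
        (L₂₂ : Matrix (Fin d' ⊕ Fin d') (Fin d' ⊕ Fin d') ℝ),
        (Matrix.fromBlocks X L₁₂ L₂₁ L₂₂)ᵀ *
            Matrix.fromBlocks J 0 0
              (Matrix.fromBlocks 0 1 (-1) 0 : Matrix (Fin d' ⊕ Fin d') (Fin d' ⊕ Fin d') ℝ) *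
            Matrix.fromBlocks X L₁₂ L₂₁ L₂₂
          = Matrix.fromBlocks J 0 0
              (Matrix.fromBlocks 0 1 (-1) 0 : Matrix (Fin d' ⊕ Fin d') (Fin d' ⊕ Fin d') ℝ) ∧
        L₂₁ᵀ * L₂₁ = Y
    ((∃ d' : ℕ, 1 ≤ d' ∧ dil d') ↔
      (Y.map Complex.ofReal + Complex.I • ((J - Xᵀ * J * X).map Complex.ofReal)).PosSemidef) ∧
    ((Y.map Complex.ofReal + Complex.I • ((J - Xᵀ * J * X).map Complex.ofReal)).PosSemidef ↔
      (Y.map Complex.ofReal - Complex.I • ((J - Xᵀ * J * X).map Complex.ofReal)).PosSemidef) ∧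
    ((Y.map Complex.ofReal + Complex.I • ((J - Xᵀ * J * X).map Complex.ofReal)).PosSemidef →
      Y.PosSemidef ∧ dil (2 * d)) := by
  intro J dil
  have hA : (stdJ (Fin d) ℝ - Xᵀ * stdJ (Fin d) ℝ * X)ᵀ =
      -(stdJ (Fin d) ℝ - Xᵀ * stdJ (Fin d) ℝ * X) := by
    rw [transpose_sub, transpose_transpose_mul_mul (stdJ_transpose _ _), stdJ_transpose, neg_sub,
      neg_sub_neg]
  have dil_of_factorization (q : ℕ) (C : Matrix (Fin q ⊕ Fin q) (Fin d ⊕ Fin d) ℝ)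
      (hCY : Cᵀ * C = Y) (hCA : Cᵀ * stdJ (Fin q) ℝ * C = J - Xᵀ * J * X) : dil q := by
    obtain ⟨L₁₂, L₂₂, hL⟩ := exists_symplectic_dilation X C hCA
    exact ⟨L₁₂, C, L₂₂, hL, hCY⟩
  have dil_of_posSemidef
      (h : (Y.map ofReal + I • ((J - Xᵀ * J * X).map ofReal)).PosSemidef) : dil (2 * d) := by
    obtain ⟨C, hCY, hCA⟩ := exists_factorization_of_posSemidef (k := Fin (2 * d))
      (by simp only [Fintype.card_fin, Fintype.card_sum]; ring) h
    exact dil_of_factorization _ C hCY hCA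
  refine ⟨⟨?_, fun h => ?_⟩, posSemidef_add_I_smul_iff_sub hY hA,
    fun h => ⟨?_, dil_of_posSemidef h⟩⟩
  · rintro ⟨d', -, L₁₂, L₂₁, L₂₂, hL, hL₂₁⟩
    exact hL₂₁ ▸ posSemidef_of_symplectic_dilation hL
  · rcases Nat.eq_zero_or_pos d with hd | hd
    -- `d' = 2d` is not allowed here, but everything is trivial over the empty index type
    · have : IsEmpty (Fin d) := by rw [hd]; infer_instance
      exact ⟨1, le_rfl, dil_of_factorization 1 0 (Subsingleton.elim _ _) (Subsingleton.elim _ _)⟩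
    · exact ⟨2 * d, by omega, dil_of_posSemidef h⟩
  · obtain ⟨-, C, -, -, hCY⟩ := dil_of_posSemidef h
    exact hCY ▸ posSemidef_conjTranspose_mul_self C
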